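/- For all real numbers s with 0 < s < 1/2, all x > 4s, and all y > 0, one has β(x-4s, y) ≤ β(x,y) · ((1+4s)x/(x-4s)) · (x(x+1)/((x+1)² + y²))^{-2s}. -/

import Mathlib

/-!
Integration by parts gives the recurrence `((a+1)² + y²) β(a+2) = a(a+1) β(a)`, and Hölder's
inequality makes `a ↦ β(a, y)` log-convex. With `u = x - 4s` we have
`u + 2 = 2s·x + (1-2s)·(x+2)`, so
`β(u) = ((u+1)² + y²)/(u(u+1)) · β(u+2) ≤ ((u+1)² + y²)/(u(u+1)) · β(x)^{2s} β(x+2)^{1-2s}`,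
and `β(x+2) = r β(x)` with `r = x(x+1)/((x+1)² + y²)`. What is left is the elementary bound
`((u+1)² + y²)/(u(u+1)) · r ≤ (1+4s)x/u`.
-/

open MeasureTheory

/-- `β(x,y) = ∫_{-π/2}^{π/2} (cos t)^{x-1} e^{yt} dt`. -/
noncomputable def beta (x y : ℝ) : ℝ :=
  ∫ t in (-(Real.pi / 2))..(Real.pi / 2), (Real.cos t) ^ (x - 1) * Real.exp (y * t)

open Real Set intervalIntegral

theorem integral_rpow_mul_rpow_le_of_nonneg {α : Type*} [MeasurableSpace α] {μ : Measure α}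
    {f g : α → ℝ} (hf0 : 0 ≤ᵐ[μ] f) (hg0 : 0 ≤ᵐ[μ] g) (hf : Integrable f μ)
    (hg : Integrable g μ) {θ : ℝ} (hθ0 : 0 < θ) (hθ1 : θ < 1) :
    ∫ a, f a ^ θ * g a ^ (1 - θ) ∂μ ≤ (∫ a, f a ∂μ) ^ θ * (∫ a, g a ∂μ) ^ (1 - θ) := by
  have hθ1' : 0 < 1 - θ := sub_pos.2 hθ1
  have hpq : θ⁻¹.HolderConjugate (1 - θ)⁻¹ :=
    Real.holderConjugate_iff.2 ⟨one_lt_inv₀ hθ0 |>.2 hθ1, by simp⟩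
  have memLp {h : α → ℝ} (h0 : 0 ≤ᵐ[μ] h) (hi : Integrable h μ) {p : ℝ} (hp : 0 < p) :
      MemLp (fun a => h a ^ p) (ENNReal.ofReal p⁻¹) μ := by
    have := (memLp_one_iff_integrable.2 hi).norm_rpow_div (ENNReal.ofReal p)
    rw [ENNReal.toReal_ofReal hp.le, one_div, ← ENNReal.ofReal_inv_of_pos hp] at this
    refine this.ae_eq ?_
    filter_upwards [h0] with a ha
    rw [Real.norm_of_nonneg ha]
  have rpow_inv {h : α → ℝ} (h0 : 0 ≤ᵐ[μ] h) {p : ℝ} (hp : 0 < p) :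
      ∫ a, (h a ^ p) ^ p⁻¹ ∂μ = ∫ a, h a ∂μ := by
    refine integral_congr_ae ?_
    filter_upwards [h0] with a ha
    exact Real.rpow_rpow_inv ha hp.ne'
  have := integral_mul_le_Lp_mul_Lq_of_nonneg hpq
    (by filter_upwards [hf0] with a ha using Real.rpow_nonneg ha θ)
    (by filter_upwards [hg0] with a ha using Real.rpow_nonneg ha (1 - θ))
    (memLp hf0 hf hθ0) (memLp hg0 hg hθ1')
  rwa [rpow_inv hf0 hθ0, rpow_inv hg0 hθ1', one_div, one_div, inv_inv, inv_inv] at this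

lemma cos_rpow_le_of_nonpos {r t : ℝ} (hr : r ≤ 0) (ht : t ∈ Ioo (-(π / 2)) (π / 2)) :
    cos t ^ r ≤ (2 / π) ^ r * ((π / 2 - t) ^ r + (π / 2 + t) ^ r) := by
  obtain ⟨ht₁, ht₂⟩ := ht
  have hπ := pi_pos
  -- Jordan's inequality on each half of the interval: `cos t ≥ 1 - 2|t|/π`.
  have hcos : 2 / π * (π / 2 - |t|) ≤ cos t := by
    rcases abs_cases t with ⟨h, h0⟩ | ⟨h, h0⟩ <;> rw [h]
    · linarith [one_sub_mul_le_cos h0 ht₂.le, show 2 / π * (π / 2) = 1 by field_simp]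
    · linarith [one_add_mul_le_cos ht₁.le h0.le, show 2 / π * (π / 2) = 1 by field_simp]
  have hpos : 0 < π / 2 - |t| := by rw [sub_pos, abs_lt]; exact ⟨ht₁, ht₂⟩
  calc cos t ^ r ≤ (2 / π * (π / 2 - |t|)) ^ r := rpow_le_rpow_of_nonpos (by positivity) hcos hr
    _ = (2 / π) ^ r * (π / 2 - |t|) ^ r := mul_rpow (by positivity) hpos.le
    _ ≤ (2 / π) ^ r * ((π / 2 - t) ^ r + (π / 2 + t) ^ r) := by
      gcongr
      have h₁ := rpow_nonneg (show 0 ≤ π / 2 - t by linarith) r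
      have h₂ := rpow_nonneg (show 0 ≤ π / 2 + t by linarith) r
      rcases abs_cases t with ⟨h, -⟩ | ⟨h, -⟩
      · rw [h]; linarith
      · rw [h, sub_neg_eq_add]; linarith

lemma intervalIntegrable_cos_rpow {r : ℝ} (hr : -1 < r) :
    IntervalIntegrable (fun t => cos t ^ r) volume (-(π / 2)) (π / 2) := by
  rcases le_or_gt 0 r with hr0 | hr0
  · exact ((continuous_rpow_const hr0).comp continuous_cos).intervalIntegrable _ _
  have hle : -(π / 2) ≤ π / 2 := by linarith [pi_pos]
  have hdom : IntervalIntegrable (fun t => (2 / π) ^ r * ((π / 2 - t) ^ r + (π / 2 + t) ^ r))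
      volume (-(π / 2)) (π / 2) := by
    refine (IntervalIntegrable.add ?_ ?_).const_mul _
    · simpa [show π / 2 - π = -(π / 2) by ring] using
        ((intervalIntegrable_rpow' hr).comp_sub_left (π / 2) (a := 0) (b := π)).symm
    · simpa [show π - π / 2 = π / 2 by ring, add_comm] using
        (intervalIntegrable_rpow' hr).comp_add_right (π / 2) (a := 0) (b := π)
  rw [intervalIntegrable_iff_integrableOn_Ioo_of_le hle] at hdom ⊢
  refine hdom.mono' (continuous_cos.measurable.pow_const r).aestronglyMeasurable ?_
  refine ae_restrict_of_forall_mem measurableSet_Ioo fun t ht => ?_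
  rw [norm_of_nonneg (rpow_nonneg (cos_nonneg_of_mem_Icc (Ioo_subset_Icc_self ht)) r)]
  exact cos_rpow_le_of_nonpos hr0.le ht

lemma intervalIntegrable_cos_rpow_mul_exp {a : ℝ} (ha : 0 < a) (y : ℝ) :
    IntervalIntegrable (fun t => cos t ^ (a - 1) * exp (y * t)) volume (-(π / 2)) (π / 2) :=
  (intervalIntegrable_cos_rpow (by linarith)).mul_continuousOn
    (continuous_exp.comp (continuous_const_mul y)).continuousOn

lemma beta_pos {a : ℝ} (ha : 0 < a) (y : ℝ) : 0 < beta a y :=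
  intervalIntegral_pos_of_pos_on (intervalIntegrable_cos_rpow_mul_exp ha y)
    (fun t ht => mul_pos (rpow_pos_of_pos (cos_pos_of_mem_Ioo ht) _) (exp_pos _))
    (by linarith [pi_pos])

lemma beta_eq_integral_Ioo (a y : ℝ) :
    beta a y = ∫ t in Ioo (-(π / 2)) (π / 2), cos t ^ (a - 1) * exp (y * t) := by
  rw [beta, integral_of_le (by linarith [pi_pos]), integral_Ioc_eq_integral_Ioo]

lemma integrableOn_cos_rpow_mul_exp {a : ℝ} (ha : 0 < a) (y : ℝ) :
    IntegrableOn (fun t => cos t ^ (a - 1) * exp (y * t)) (Ioo (-(π / 2)) (π / 2)) :=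
  (intervalIntegrable_iff_integrableOn_Ioo_of_le (by linarith [pi_pos])).1
    (intervalIntegrable_cos_rpow_mul_exp ha y)

theorem beta_le_rpow_mul_rpow {b c θ : ℝ} (hb : 0 < b) (hc : 0 < c) (hθ0 : 0 < θ) (hθ1 : θ < 1)
    (y : ℝ) : beta (θ * b + (1 - θ) * c) y ≤ beta b y ^ θ * beta c y ^ (1 - θ) := by
  have hnonneg (a : ℝ) : 0 ≤ᵐ[volume.restrict (Ioo (-(π / 2)) (π / 2))]
      fun t => cos t ^ (a - 1) * exp (y * t) :=
    ae_restrict_of_forall_mem measurableSet_Ioo fun t ht =>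
      mul_nonneg (rpow_nonneg (cos_pos_of_mem_Ioo ht).le _) (exp_pos _).le
  have hholder := integral_rpow_mul_rpow_le_of_nonneg (hnonneg b) (hnonneg c)
    (integrableOn_cos_rpow_mul_exp hb y) (integrableOn_cos_rpow_mul_exp hc y) hθ0 hθ1
  rw [← beta_eq_integral_Ioo, ← beta_eq_integral_Ioo] at hholder
  refine le_of_eq_of_le ?_ hholder
  rw [beta_eq_integral_Ioo]
  refine setIntegral_congr_fun measurableSet_Ioo fun t ht => ?_
  have hct := cos_pos_of_mem_Ioo ht
  rw [mul_rpow (rpow_nonneg hct.le _) (exp_pos _).le,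
    mul_rpow (rpow_nonneg hct.le _) (exp_pos _).le, ← rpow_mul hct.le, ← rpow_mul hct.le,
    ← exp_mul, ← exp_mul, mul_mul_mul_comm, ← rpow_add hct, ← exp_add]
  ring_nf

lemma hasDerivAt_beta_primitive {a y t : ℝ} (hct : 0 < cos t) :
    HasDerivAt (fun t => cos t ^ a * exp (y * t) * ((a + 1) * sin t + y * cos t))
      (((a + 1) ^ 2 + y ^ 2) * (cos t ^ (a + 2 - 1) * exp (y * t))
        - a * (a + 1) * (cos t ^ (a - 1) * exp (y * t))) t := by
  have hcos := (hasDerivAt_rpow_const (p := a) (Or.inl hct.ne')).comp t (hasDerivAt_cos t)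
  have hexp := (hasDerivAt_exp (y * t)).comp t ((hasDerivAt_id t).const_mul y)
  have htrig := ((hasDerivAt_sin t).const_mul (a + 1)).add ((hasDerivAt_cos t).const_mul y)
  refine ((hcos.mul hexp).mul htrig).congr_deriv ?_
  have hA : cos t ^ a = cos t ^ (a - 1) * cos t := by
    rw [← rpow_add_one hct.ne', sub_add_cancel]
  have hB : cos t ^ (a + 2 - 1) = cos t ^ (a - 1) * cos t ^ 2 := by
    rw [← rpow_natCast, ← rpow_add hct]; ring_nf
  simp only [Pi.mul_apply, Pi.add_apply, Function.comp_apply, hA, hB]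
  linear_combination (-(a * (a + 1)) * cos t ^ (a - 1) * exp (y * t)) * sin_sq t

theorem beta_add_two {a : ℝ} (ha : 0 < a) (y : ℝ) :
    ((a + 1) ^ 2 + y ^ 2) * beta (a + 2) y = a * (a + 1) * beta a y := by
  have hle : -(π / 2) ≤ π / 2 := by linarith [pi_pos]
  have hcont : Continuous fun t => cos t ^ a * exp (y * t) * ((a + 1) * sin t + y * cos t) := by
    have := (continuous_rpow_const ha.le).comp continuous_cos
    fun_prop
  have hFTC := integral_eq_sub_of_hasDeriv_right_of_le hle hcont.continuousOn
    (fun t ht => (hasDerivAt_beta_primitive (y := y) (cos_pos_of_mem_Ioo ht)).hasDerivWithinAt)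
    (((intervalIntegrable_cos_rpow_mul_exp (by linarith) y).const_mul _).sub
      ((intervalIntegrable_cos_rpow_mul_exp ha y).const_mul _))
  rw [integral_sub (((intervalIntegrable_cos_rpow_mul_exp (by linarith) y).const_mul _))
      ((intervalIntegrable_cos_rpow_mul_exp ha y).const_mul _),
    intervalIntegral.integral_const_mul, intervalIntegral.integral_const_mul] at hFTC
  simp only [cos_neg, cos_pi_div_two, zero_rpow ha.ne', zero_mul, sub_zero] at hFTC
  rw [beta, beta]
  linarith

lemma shifted_ratio_le {d x : ℝ} (hd : 0 ≤ d) (hdx : d < x) (y : ℝ) :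
    ((x - d + 1) ^ 2 + y ^ 2) / ((x - d) * (x - d + 1)) * (x * (x + 1) / ((x + 1) ^ 2 + y ^ 2))
      ≤ (1 + d) * x / (x - d) := by
  have he : 0 < x - d := sub_pos.2 hdx
  have hx : 0 < x := hd.trans_lt hdx
  rw [div_mul_div_comm, div_le_div_iff₀ (by positivity) he]
  have hgap : 0 ≤ x * (x - d) * d * ((x - d) * y ^ 2 + (x + 2) * (x + 1) * (x - d + 1)) := by
    positivity
  linear_combination hgap

theorem beta_negative_upper_bound_general (x y s : ℝ) (hs0 : 0 < s) (hs : s < 1 / 2)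
    (hx : 4 * s < x) :
    beta (x - 4 * s) y ≤
      beta x y * ((1 + 4 * s) * x / (x - 4 * s)) *
        (x * (x + 1) / ((x + 1) ^ 2 + y ^ 2)) ^ (-(2 * s)) := by
  set u := x - 4 * s
  have hu0 : 0 < u := sub_pos.2 hx
  have hx0 : 0 < x := by linarith
  set r := x * (x + 1) / ((x + 1) ^ 2 + y ^ 2)
  have hr0 : 0 < r := by positivity
  have hβx := beta_pos hx0 y
  have hrec_u : beta u y = ((u + 1) ^ 2 + y ^ 2) / (u * (u + 1)) * beta (u + 2) y := by
    rw [div_mul_eq_mul_div, beta_add_two hu0 y]; field_simp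
  have hrec_x : beta (x + 2) y = r * beta x y := by
    rw [div_mul_eq_mul_div, eq_div_iff (by positivity), mul_comm, beta_add_two hx0 y]
  have hconv : beta (u + 2) y ≤ beta x y ^ (2 * s) * beta (x + 2) y ^ (1 - 2 * s) := by
    have := beta_le_rpow_mul_rpow hx0 (by linarith : 0 < x + 2) (by linarith : 0 < 2 * s)
      (by linarith : 2 * s < 1) y
    rwa [show 2 * s * x + (1 - 2 * s) * (x + 2) = u + 2 by ring] at this
  have hinterp :
      beta x y ^ (2 * s) * beta (x + 2) y ^ (1 - 2 * s) = beta x y * r * r ^ (-(2 * s)) := by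
    rw [hrec_x, mul_rpow hr0.le hβx.le, rpow_sub hr0, rpow_sub hβx, rpow_neg hr0.le,
      rpow_one, rpow_one]
    field_simp
  calc beta u y = ((u + 1) ^ 2 + y ^ 2) / (u * (u + 1)) * beta (u + 2) y := hrec_u
    _ ≤ ((u + 1) ^ 2 + y ^ 2) / (u * (u + 1)) * (beta x y * r * r ^ (-(2 * s))) := by
      rw [← hinterp]; gcongr
    _ = beta x y * (((u + 1) ^ 2 + y ^ 2) / (u * (u + 1)) * r) * r ^ (-(2 * s)) := by ring
    _ ≤ beta x y * ((1 + 4 * s) * x / u) * r ^ (-(2 * s)) := by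
      gcongr
      exact shifted_ratio_le (by positivity) hx y

theorem beta_negative_upper_bound (x y s : ℝ) (hs0 : 0 < s) (hs : s < 1 / 2)
    (hx : 4 * s < x) (hy : 0 < y) :
    beta (x - 4 * s) y ≤
      beta x y * ((1 + 4 * s) * x / (x - 4 * s)) *
        (x * (x + 1) / ((x + 1) ^ 2 + y ^ 2)) ^ (-(2 * s)) :=
  beta_negative_upper_bound_general x y s hs0 hs hx
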